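/- Let H be a finite dimensional hereditary algebra with an exceptional module N (Ext¹(N,N) = 0), P a projective H-module, and tP = t_N(P) the trace of N in P. Then Ext¹(N, tP) = 0; consequently the natural map Hom(N, P) → Hom(N, P/tP) has image 0, so Hom(N, P/tP) = 0. -/

import Mathlib

open CategoryTheory

/-- `Ext¹` of modules, as an abelian group (`ℤ`-module). -/
noncomputable def ext1 (Λ : Type) [Ring Λ] (M N : ModuleCat Λ) : ModuleCat ℤ :=
  ((Ext ℤ (ModuleCat Λ) 1).obj (Opposite.op M)).obj N

/-- The trace of `N` in `P`: the sum of the images of all maps `N → P`. -/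
noncomputable def traceSub (Λ : Type) [Ring Λ] (N P : ModuleCat Λ) : Submodule Λ P :=
  ⨆ g : N →ₗ[Λ] P, LinearMap.range g

/-!
Choose a free presentation `0 → K → F → N → 0`. As `H` is hereditary, `K` is projective, so this
is a projective resolution of `N`, and `Ext¹(N, Y) = 0` exactly when every map `K → Y` extends
to `F`. This extension property passes from `N` to finite powers of `N` and, `K` being
projective, to their quotients. Since `H` is noetherian and `P` is finitely generated, the trace
`tP` is such a quotient, whence `Ext¹(N, tP) = 0`. The piece
`Hom(N, P) → Hom(N, P/tP) → Ext¹(N, tP)` of the long exact sequence then makes the first map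
surjective, and it is zero because every map `N → P` lands in `tP`.
-/

open Limits ZeroObject

namespace CategoryTheory.ShortComplex

variable {C : Type*} [Category C] [Abelian C] (S : ShortComplex C)

noncomputable def fComplex : ChainComplex C ℕ :=
  ChainComplex.of (fun | 0 => S.X₂ | 1 => S.X₁ | _ => 0) (fun | 0 => S.f | _ => 0)
    (fun _ => zero_comp)

lemma fComplex_d_one_zero : S.fComplex.d 1 0 = S.f := by
  simp only [fComplex]; exact ChainComplex.of_d _ _ 0

lemma fComplex_d_two_one : S.fComplex.d 2 1 = 0 := by
  simp only [fComplex]; exact ChainComplex.of_d _ _ 1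

lemma isZero_fComplex_X (n : ℕ) : IsZero (S.fComplex.X (n + 2)) := isZero_zero C

variable {S}

noncomputable def ShortExact.projectiveResolution (hS : S.ShortExact) [Projective S.X₁]
    [Projective S.X₂] : ProjectiveResolution S.X₃ where
  complex := S.fComplex
  projective
    | 0 => inferInstanceAs (Projective S.X₂)
    | 1 => inferInstanceAs (Projective S.X₁)
    | n + 2 => (S.isZero_fComplex_X n).projective
  π := (ChainComplex.toSingle₀Equiv _ _).symm ⟨S.g, by rw [fComplex_d_one_zero]; exact S.zero⟩
  quasiIso := ⟨fun
    | 0 => by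
      rw [ChainComplex.quasiIsoAt₀_iff, ShortComplex.quasiIso_iff_of_zeros' _ rfl rfl rfl]
      refine (ShortComplex.exact_and_epi_g_iff_of_iso ?_).1 ⟨hS.exact, hS.epi_g⟩
      exact ShortComplex.isoMk (Iso.refl _) (Iso.refl _) (Iso.refl _)
        ((Category.id_comp _).trans (S.fComplex_d_one_zero.trans (Category.comp_id _).symm))
        ((Category.id_comp _).trans ((ChainComplex.toSingle₀Equiv_symm_apply_f_zero _ _).trans
          (Category.comp_id _).symm))
    | 1 => by
      rw [quasiIsoAt_iff_exactAt' (hL := ChainComplex.exactAt_succ_single_obj ..),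
        HomologicalComplex.exactAt_iff' _ 2 1 0 (by simp) (by simp)]
      refine (ShortComplex.exact_iff_mono _ S.fComplex_d_two_one).2 ?_
      change Mono (S.fComplex.d 1 0)
      rw [fComplex_d_one_zero]
      exact hS.mono_f
    | n + 2 => by
      rw [quasiIsoAt_iff_exactAt' (hL := ChainComplex.exactAt_succ_single_obj ..),
        HomologicalComplex.exactAt_iff' _ (n + 3) (n + 2) (n + 1) (by simp) (by simp)]
      exact ShortComplex.exact_of_isZero_X₂ _ (S.isZero_fComplex_X n)⟩

lemma ShortExact.isZero_ext_one_iff {R : Type*} [Ring R] [Linear R C] [EnoughProjectives C]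
    (hS : S.ShortExact) [Projective S.X₁] [Projective S.X₂] (Y : C) :
    IsZero (((Ext R C 1).obj (Opposite.op S.X₃)).obj Y) ↔
      Function.Surjective fun ψ : S.X₂ ⟶ Y => S.f ≫ ψ := by
  set L := hS.projectiveResolution.complex.linearYonedaObj R Y
  have hL₂ : IsZero (L.X 2) :=
    @ModuleCat.isZero_of_subsingleton R _ _ ⟨fun a b => (S.isZero_fComplex_X 0).eq_of_src a b⟩
  rw [Iso.isZero_iff (hS.projectiveResolution.isoExt 1 Y),
    ← HomologicalComplex.exactAt_iff_isZero_homology,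
    HomologicalComplex.exactAt_iff' _ 0 1 2 (by simp) (by simp),
    ShortComplex.exact_iff_epi _ (hL₂.eq_of_tgt _ _), ModuleCat.epi_iff_surjective]
  refine Iff.of_eq (congrArg _ (funext fun ψ => ?_))
  exact congrArg (· ≫ ψ) S.fComplex_d_one_zero

lemma ShortExact.exists_comp_g_eq_of_surjective_precomp {T : ShortComplex C} (hS : S.ShortExact)
    (hT : T.ShortExact) [Projective S.X₂] (h : Function.Surjective fun ψ : S.X₂ ⟶ T.X₁ => S.f ≫ ψ)
    (f : S.X₃ ⟶ T.X₃) : ∃ g : S.X₃ ⟶ T.X₂, g ≫ T.g = f := by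
  have := hS.epi_g
  have := hT.mono_f
  have := hT.epi_g
  let l := Projective.factorThru (S.g ≫ f) T.g
  obtain ⟨e, he⟩ := h (hT.exact.lift (S.f ≫ l) (by simp [l]))
  refine ⟨hS.exact.desc (l - e ≫ T.f) ?_, ?_⟩
  · simp only at he
    simp [← Category.assoc, he]
  · rw [← cancel_epi S.g, hS.exact.g_desc_assoc]
    simp [l]

end CategoryTheory.ShortComplex

lemma CategoryTheory.Projective.surjective_precomp_of_epi {C : Type*} [Category C]
    {X₁ X₂ Y Z : C} [Projective X₁] (f : X₁ ⟶ X₂) (q : Y ⟶ Z) [Epi q]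
    (h : Function.Surjective fun ψ : X₂ ⟶ Y => f ≫ ψ) :
    Function.Surjective fun ψ : X₂ ⟶ Z => f ≫ ψ := by
  intro φ
  obtain ⟨ψ, hψ⟩ := h (Projective.factorThru φ q)
  refine ⟨ψ ≫ q, ?_⟩
  simp only at hψ ⊢
  rw [← Category.assoc, hψ, Projective.factorThru_comp]

lemma ModuleCat.surjective_precomp_pi.{v} {R : Type*} [Ring R] {X₁ X₂ Y : ModuleCat.{v} R}
    (f : X₁ ⟶ X₂) (ι : Type v) (h : Function.Surjective fun ψ : X₂ ⟶ Y => f ≫ ψ) :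
    Function.Surjective fun ψ : X₂ ⟶ ModuleCat.of R (ι → Y) => f ≫ ψ := by
  intro φ
  choose ψ hψ using fun i => h (φ ≫ ofHom (LinearMap.proj i))
  refine ⟨ofHom (LinearMap.pi fun i => (ψ i).hom), ?_⟩
  ext x i
  exact congr($(hψ i).hom x)

theorem LinearMap.range_lsum {R M P ι : Type*} [Semiring R] [AddCommMonoid M] [Module R M]
    [AddCommMonoid P] [Module R P] [Fintype ι] [DecidableEq ι] (f : ι → M →ₗ[R] P) :
    range (lsum R (fun _ => M) ℕ f) = ⨆ i, range (f i) := by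
  refine le_antisymm ?_ (iSup_le fun i => ?_)
  · rintro _ ⟨v, rfl⟩
    rw [lsum_apply, LinearMap.sum_apply]
    exact Submodule.sum_mem _ fun i _ => Submodule.mem_iSup_of_mem i (mem_range_self _ _)
  · rintro _ ⟨x, rfl⟩
    exact ⟨Pi.single i x, lsum_piSingle ..⟩

theorem exists_surjective_pi_traceSub {Λ : Type} [Ring Λ] (N P : ModuleCat Λ)
    [IsNoetherian Λ P] :
    ∃ (s : Finset (N →ₗ[Λ] P)) (q : (s → N) →ₗ[Λ] traceSub Λ N P), Function.Surjective q := by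
  classical
  obtain ⟨s, hs⟩ := CompleteLattice.IsCompactElement.exists_finset_of_le_iSup _
    ((Submodule.fg_iff_compact _).1 (IsNoetherian.noetherian (traceSub Λ N P)))
    (fun g : N →ₗ[Λ] P => LinearMap.range g) le_rfl
  let q := LinearMap.lsum Λ (fun _ : s => N) ℕ fun g => g.1
  have hq : LinearMap.range q = traceSub Λ N P := by
    refine le_antisymm ?_ (hs.trans ?_) <;> rw [LinearMap.range_lsum]
    · exact iSup_le fun g => le_iSup (fun g : N →ₗ[Λ] P => LinearMap.range g) g.1
    · exact iSup₂_le fun g hg => le_iSup (fun g : s => LinearMap.range g.1) ⟨g, hg⟩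
  exact ⟨s, (LinearEquiv.ofEq _ _ hq).toLinearMap ∘ₗ q.rangeRestrict,
    (LinearEquiv.ofEq _ _ hq).surjective.comp q.surjective_rangeRestrict⟩

lemma projective_submodule_of_hereditary.{u} {H : Type} [Ring H]
    (hher : ∀ Q : ModuleCat.{u} H, Projective Q →
      ∀ U : Submodule H Q, Projective (ModuleCat.of H U))
    {M : Type} [AddCommGroup M] [Module H M] [Module.Projective H M] (U : Submodule H M) :
    Module.Projective H U := by
  let e : M ≃ₗ[H] ULift.{u} M := ULift.moduleEquiv.symm
  have : Module.Projective H (ULift.{u} M) := .of_equiv e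
  have := hher (.of H (ULift.{u} M)) ((IsProjective.iff_projective _).1 this) (U.map e.toLinearMap)
  have := (IsProjective.iff_projective _).2 this
  exact .of_equiv (e.submoduleMap U).symm

theorem stmt16_general (k : Type) [Field k] (H : Type) [Ring H] [Algebra k H]
    [FiniteDimensional k H]
    (hher : ∀ Q : ModuleCat H, Projective Q →
      ∀ U : Submodule H Q, Projective (ModuleCat.of H U))
    (N P : ModuleCat H) [Module.Finite H P]
    (hN : Limits.IsZero (ext1 H N N)) :
    Limits.IsZero (ext1 H N (ModuleCat.of H ↥(traceSub H N P))) ∧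
      ∀ f : N →ₗ[H] (P ⧸ traceSub H N P), f = 0 := by
  have : IsNoetherianRing H := .of_finite k H
  set T := traceSub H N P
  let S := N.projectiveShortComplex
  have hS : S.ShortExact := N.shortExact_projectiveShortComplex
  have : Projective S.X₂ := (IsProjective.iff_projective _).1 inferInstance
  have : Projective S.X₁ :=
    (IsProjective.iff_projective _).1 (projective_submodule_of_hereditary hher _)
  have hT : Function.Surjective fun ψ : S.X₂ ⟶ .of H T => S.f ≫ ψ := by
    obtain ⟨s, q, hq⟩ := exists_surjective_pi_traceSub N P
    have : Epi (ModuleCat.ofHom q) := (ModuleCat.epi_iff_surjective _).2 hq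
    exact Projective.surjective_precomp_of_epi S.f (ModuleCat.ofHom q)
      (ModuleCat.surjective_precomp_pi S.f s ((hS.isZero_ext_one_iff N).1 hN))
  refine ⟨(hS.isZero_ext_one_iff _).2 hT, fun f => ?_⟩
  have hPT : (ShortComplex.mk (ModuleCat.ofHom T.subtype) (ModuleCat.ofHom T.mkQ)
      (by ext; simp)).ShortExact :=
    ModuleCat.shortComplex_shortExact _ (LinearMap.exact_subtype_mkQ T) T.injective_subtype
      T.mkQ_surjective
  obtain ⟨g, hg⟩ := hS.exists_comp_g_eq_of_surjective_precomp hPT hT (ModuleCat.ofHom f)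
  ext x
  have hx : T.mkQ (g.hom x) = f x := congr(ModuleCat.Hom.hom $hg x)
  rw [LinearMap.zero_apply, ← hx, Submodule.mkQ_apply, Submodule.Quotient.mk_eq_zero]
  exact le_iSup (fun g => LinearMap.range g) g.hom ⟨x, rfl⟩

/-- Let `H` be a finite dimensional hereditary algebra, `N` an exceptional module
(`Ext¹(N,N) = 0`), `P` a projective module and `tP = t_N(P)` the trace of `N` in `P`.
Then `Ext¹(N, tP) = 0`, and consequently `Hom(N, P/tP) = 0`. -/
theorem stmt16 (k : Type) [Field k] (H : Type) [Ring H] [Algebra k H]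
    [FiniteDimensional k H]
    (hher : ∀ Q : ModuleCat H, Projective Q →
      ∀ U : Submodule H Q, Projective (ModuleCat.of H U))
    (N P : ModuleCat H) [Module.Finite H N] [Module.Finite H P]
    (hN : Limits.IsZero (ext1 H N N))
    (hP : Projective P) :
    Limits.IsZero (ext1 H N (ModuleCat.of H ↥(traceSub H N P))) ∧
      ∀ f : N →ₗ[H] (P ⧸ traceSub H N P), f = 0 :=
  stmt16_general k H hher N P hN
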